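/- arXiv:math/0608123 — 3 statements merged into one kernel-verified Lean document; each statement's English description precedes it below -/
import Mathlib

section
/- Let E be a full heap over A, where P is finite. Then for any two proper ideals F and F' of E, the set differences F ∖ F' and F' ∖ F are finite sets. -/
/-- Two vertices of the Dynkin diagram are adjacent if they are distinct
and the corresponding entry of the generalized Cartan matrix is nonzero. -/
def Adj {P : Type*} (A : P → P → ℤ) (p q : P) : Prop := p ≠ q ∧ A p q ≠ 0

/-- A generalized Cartan matrix with all entries in {2, 0, -1, -2}. -/
def IsGCM {P : Type*} (A : P → P → ℤ) : Prop :=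
  (∀ p, A p p = 2) ∧ (∀ p q, p ≠ q → A p q ≤ 0) ∧
  (∀ p q, (A p q = 0 ↔ A q p = 0)) ∧
  (∀ p q, A p q = 2 ∨ A p q = 0 ∨ A p q = -1 ∨ A p q = -2)

/-- An ideal (downward-closed subset) of a partially ordered set. -/
def IsIdeal {E : Type*} [PartialOrder E] (F : Set E) : Prop :=
  ∀ ⦃x : E⦄, x ∈ F → ∀ ⦃y : E⦄, y ≤ x → y ∈ F

/-- A proper ideal: an ideal meeting each fibre `eps ⁻¹ {p}` in a nonempty
proper subset. -/
def IsProperIdeal {P E : Type*} [PartialOrder E] (eps : E → P) (F : Set E) : Prop :=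
  IsIdeal F ∧ ∀ p : P, (∃ a, eps a = p ∧ a ∈ F) ∧ (∃ a, eps a = p ∧ a ∉ F)

/-- A full heap over the generalized Cartan matrix `A` with labelling map `eps`.
Local finiteness is expressed by the `LocallyFiniteOrder` instance. -/
structure IsFullHeap {P E : Type*} [PartialOrder E] [LocallyFiniteOrder E]
    (A : P → P → ℤ) (eps : E → P) : Prop where
  /-- elements with equal or adjacent labels are comparable -/
  comparable : ∀ a b : E, (eps a = eps b ∨ Adj A (eps a) (eps b)) → a ≤ b ∨ b ≤ a
  /-- the order is the reflexive-transitive closure of its restriction to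
  pairs with equal or adjacent labels -/
  le_generated : ∀ a b : E, a ≤ b ↔
    Relation.ReflTransGen (fun x y : E => x ≤ y ∧ (eps x = eps y ∨ Adj A (eps x) (eps y))) a b
  /-- each fibre is unbounded above in E -/
  unbounded_above : ∀ (p : P) (a : E), ∃ b, eps b = p ∧ ¬ b ≤ a
  /-- each fibre is unbounded below in E -/
  unbounded_below : ∀ (p : P) (a : E), ∃ b, eps b = p ∧ ¬ a ≤ b
  /-- covering elements with adjacent labels exist -/
  covers : ∀ p p' : P, Adj A p p' → ∀ a : E, eps a = p →
    ∃ b, eps b = p' ∧ (a ⋖ b ∨ b ⋖ a)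
  /-- the defining condition on open intervals between consecutive elements
  of a fibre -/
  interval : ∀ a b : E, a < b → eps a = eps b →
    (∀ c, a < c → c < b → eps c ≠ eps a) →
    (∑ c ∈ Finset.Ioo a b, A (eps a) (eps c)) = -2

/-- The character of a pair of proper ideals:
`chi(F, F')(p) = |(F' \ F) ∩ eps⁻¹(p)| - |(F \ F') ∩ eps⁻¹(p)|`. -/
noncomputable def chiFn {P E : Type*} (eps : E → P) (F F' : Set E) : P → ℤ :=
  fun p => (((F' \ F) ∩ eps ⁻¹' {p}).ncard : ℤ) - (((F \ F') ∩ eps ⁻¹' {p}).ncard : ℤ)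

open Classical in
/-- The operator `S_p` on ideals: remove the (unique) element of label `p`
that can be removed, else add the (unique) element of label `p` that can be
added, else do nothing. -/
noncomputable def Sact {P E : Type*} [PartialOrder E] (eps : E → P) (p : P) (I : Set E) :
    Set E :=
  if h : ∃ a, a ∈ I ∧ eps a = p ∧ IsIdeal (I \ {a}) then I \ {h.choose}
  else if h' : ∃ a, a ∉ I ∧ eps a = p ∧ IsIdeal (I ∪ {a}) then I ∪ {h'.choose}
  else I

/-- The defining relations of the Weyl group of a (doubly laced)
generalized Cartan matrix. -/
def weylRels {P : Type*} (A : P → P → ℤ) : Set (FreeGroup P) :=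
  {r | (∃ p, r = FreeGroup.of p ^ 2) ∨
       (∃ p q, A p q = 0 ∧ r = (FreeGroup.of p * FreeGroup.of q) ^ 2) ∨
       (∃ p q, A p q * A q p = 1 ∧ r = (FreeGroup.of p * FreeGroup.of q) ^ 3) ∨
       (∃ p q, A p q * A q p = 2 ∧ r = (FreeGroup.of p * FreeGroup.of q) ^ 4)}

/-- The Weyl group of a generalized Cartan matrix, as a presented group. -/
abbrev WeylGroup {P : Type*} (A : P → P → ℤ) := PresentedGroup (weylRels A)

/-- The reflection `s_p` in the reflection representation on `ℤ^P`:
`s_p(v) = v - (∑ q, a_{pq} v_q) e_p`. -/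
def reflAct {P : Type*} [Fintype P] [DecidableEq P] (A : P → P → ℤ) (p : P) (v : P → ℤ) :
    P → ℤ :=
  fun r => if r = p then v p - ∑ q, A p q * v q else v r

/-- `A` is of affine type: indecomposable, and `A δ = 0` for some positive
integer vector `δ`. -/
def IsAffine {P : Type*} [Fintype P] (A : P → P → ℤ) : Prop :=
  (∀ p q : P, Relation.ReflTransGen (Adj A) p q) ∧
  ∃ δ : P → ℤ, (∀ p, 0 < δ p) ∧ ∀ p, (∑ q, A p q * δ q) = 0

/-- If `E` is a full heap over `A` with `P` finite, then for
any two proper ideals `F`, `F'` of `E`, the set differences `F \ F'` and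
`F' \ F` are finite. -/
theorem stmt0 {P E : Type*} [Fintype P] [PartialOrder E] [LocallyFiniteOrder E]
    {A : P → P → ℤ} {eps : E → P}
    (hA : IsGCM A) (hE : IsFullHeap A eps)
    {F F' : Set E} (hF : IsProperIdeal eps F) (hF' : IsProperIdeal eps F') :
    (F \ F').Finite ∧ (F' \ F).Finite := by
  have key : ∀ (G G' : Set E), IsProperIdeal eps G → IsProperIdeal eps G' →
      (G \ G').Finite := by
    intro G G' hG hG'
    have hu : G \ G' = ⋃ p : P, (G \ G') ∩ eps ⁻¹' {p} := by
      ext x; simp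
    rw [hu]
    apply Set.finite_iUnion
    intro p
    obtain ⟨a0, ha0p, ha0⟩ := (hG'.2 p).1
    obtain ⟨b0, hb0p, hb0⟩ := (hG.2 p).2
    apply Set.Finite.subset (Set.finite_Icc a0 b0)
    rintro x ⟨⟨hxG, hxG'⟩, hxp⟩
    simp only [Set.mem_preimage, Set.mem_singleton_iff] at hxp
    constructor
    · rcases hE.comparable x a0 (by rw [hxp, ha0p]; left; rfl) with h | h
      · exact absurd (hG'.1 ha0 h) hxG'
      · exact h
    · rcases hE.comparable x b0 (by rw [hxp, hb0p]; left; rfl) with h | h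
      · exact h
      · exact absurd (hG.1 hxG h) hb0
  exact ⟨key F F' hF hF', key F' F hF' hF⟩
end

section
/- Let E be a full heap over A, where P is finite, and let F, F' be proper ideals of E. Then there exist r in N and vertices m_1, ..., m_r in P such that F' = S_{m_1}(S_{m_2}( ... S_{m_r}(F) ... )), such that each partial image G_j = S_{m_j}(S_{m_{j+1}}( ... S_{m_r}(F) ... )) differs from the previous one by adding or removing a single element of E (their symmetric difference is a singleton), and such that for each i the standard basis vector e_{m_i} appears with nonzero coefficient in chi(F, F'). -/
/-! Two proper ideals `F`, `F'` of a full heap differ by finitely many elements, since each fibre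
`eps⁻¹(p)` is a chain that meets both ideals in initial segments. If `F ⊈ F'`, a maximal
element `β` of `F \ F'` is maximal in `F`, and `S_{eps β}` removes it. Otherwise a minimal
element `β` of `F' \ F` can be added to `F`, and `S_{eps β}` adds it: an element of `F` with the
same label that could be removed would be covered by `β` in its own fibre, which axiom (5)
forbids. Each step shrinks `F ∆ F'` by one element. Finally, a fibre cannot meet both `F \ F'`
and `F' \ F`, so `chi(F, F')` is nonzero on the label of every element of `F ∆ F'`. -/

open scoped symmDiff

lemma symmDiff_eq_sdiff_of_symmDiff_eq {α : Type*} [GeneralizedBooleanAlgebra α] {a b c d : α}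
    (h : a ∆ b = d) (hd : d ≤ b ∆ c) : a ∆ c = b ∆ c \ d := by
  rw [← symmDiff_of_le hd, ← h, symmDiff_assoc, symmDiff_symmDiff_cancel_left]

lemma List.foldr_drop_append_singleton {α β : Type*} (f : α → β → β) (x : β) (l : List α)
    (a : α) {j : ℕ} (hj : j ≤ l.length) :
    ((l ++ [a]).drop j).foldr f x = (l.drop j).foldr f (f a x) := by
  rw [List.drop_append_of_le_length hj, List.foldr_append]
  rfl

section Ideal

variable {E : Type*} [PartialOrder E] {F : Set E}

lemma isIdeal_sdiff_singleton_iff (hF : IsIdeal F) {a : E} :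
    IsIdeal (F \ {a}) ↔ ∀ x ∈ F, ¬ a < x := by
  constructor
  · intro h x hx hax
    exact (h ⟨hx, hax.ne'⟩ hax.le).2 rfl
  · rintro h x ⟨hx, hxa⟩ y hyx
    refine ⟨hF hx hyx, fun hya => ?_⟩
    rw [Set.mem_singleton_iff] at hya hxa
    subst hya
    exact h x hx (lt_of_le_of_ne hyx (Ne.symm hxa))

lemma isIdeal_union_singleton (hF : IsIdeal F) {b : E} (h : ∀ y < b, y ∈ F) :
    IsIdeal (F ∪ {b}) := by
  rintro x (hx | rfl) y hyx
  · exact Or.inl (hF hx hyx)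
  · rcases hyx.eq_or_lt with rfl | hlt
    · exact Or.inr rfl
    · exact Or.inl (h y hlt)

end Ideal

def IsElementaryChain {P E : Type*} [PartialOrder E] (eps : E → P) (F : Set E) (l : List P) :
    Prop :=
  ∀ j < l.length, ∃ β : E,
    ((l.drop j).foldr (Sact eps) F) ∆ ((l.drop (j + 1)).foldr (Sact eps) F) = {β}

lemma IsElementaryChain.append_singleton {P E : Type*} [PartialOrder E] {eps : E → P}
    {F : Set E} {l : List P} {p : P} (hl : IsElementaryChain eps (Sact eps p F) l) {β : E}
    (hstep : Sact eps p F ∆ F = {β}) : IsElementaryChain eps F (l ++ [p]) := by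
  intro j hj
  rw [List.length_append, List.length_singleton] at hj
  rcases (Nat.lt_succ_iff.mp hj).lt_or_eq with hj | rfl
  · rw [List.foldr_drop_append_singleton _ _ _ _ hj.le,
      List.foldr_drop_append_singleton _ _ _ _ hj]
    exact hl j hj
  · refine ⟨β, ?_⟩
    rw [List.foldr_drop_append_singleton _ _ _ _ le_rfl,
      List.drop_eq_nil_of_le (by simp : (l ++ [p]).length ≤ l.length + 1)]
    simpa using hstep

lemma chiFn_swap {P E : Type*} (eps : E → P) (F F' : Set E) (p : P) :
    chiFn eps F' F p = -chiFn eps F F' p := by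
  simp only [chiFn]
  ring

namespace IsFullHeap

variable {P E : Type*} [PartialOrder E] [LocallyFiniteOrder E] {A : P → P → ℤ} {eps : E → P}

lemma lt_of_mem_of_notMem (hE : IsFullHeap A eps) {F : Set E} (hF : IsIdeal F) {x z : E}
    (hx : x ∈ F) (hz : z ∉ F) (h : eps x = eps z) : x < z := by
  rcases hE.comparable x z (Or.inl h) with hxz | hzx
  · exact lt_of_le_of_ne hxz (ne_of_mem_of_not_mem hx hz)
  · exact absurd (hF hx hzx) hz

lemma sdiff_finite [Finite P] (hE : IsFullHeap A eps) {F F' : Set E} (hF : IsProperIdeal eps F)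
    (hF' : IsProperIdeal eps F') : (F \ F').Finite := by
  choose y hy hyF' using fun p => (hF'.2 p).1
  choose z hz hzF using fun p => (hF.2 p).2
  refine (Set.finite_iUnion fun p => Set.finite_Ioo (y p) (z p)).subset ?_
  rintro x ⟨hxF, hxF'⟩
  refine Set.mem_iUnion.mpr ⟨eps x, ?_, ?_⟩
  · exact hE.lt_of_mem_of_notMem hF'.1 (hyF' _) hxF' (hy _)
  · exact hE.lt_of_mem_of_notMem hF.1 hxF (hzF _) (hz _).symm

lemma symmDiff_finite [Finite P] (hE : IsFullHeap A eps) {F F' : Set E} (hF : IsProperIdeal eps F)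
    (hF' : IsProperIdeal eps F') : (F ∆ F').Finite :=
  (hE.sdiff_finite hF hF').union (hE.sdiff_finite hF' hF)

lemma chiFn_neg (hE : IsFullHeap A eps) {F F' : Set E} (hF : IsIdeal F) (hF' : IsIdeal F')
    (hfin : (F \ F').Finite) {β : E} (hβ : β ∈ F \ F') : chiFn eps F F' (eps β) < 0 := by
  have hgain : (F' \ F) ∩ eps ⁻¹' {eps β} = ∅ := by
    refine Set.eq_empty_of_forall_notMem fun y ⟨⟨hyF', hyF⟩, hy⟩ => ?_
    exact (hE.lt_of_mem_of_notMem hF hβ.1 hyF hy.symm).not_gt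
      (hE.lt_of_mem_of_notMem hF' hyF' hβ.2 hy)
  have hloss : 0 < ((F \ F') ∩ eps ⁻¹' {eps β}).ncard :=
    (Set.ncard_pos (hfin.subset Set.inter_subset_left)).mpr ⟨β, hβ, rfl⟩
  simp only [chiFn, hgain, Set.ncard_empty, Nat.cast_zero]
  omega

lemma chiFn_ne_zero (hE : IsFullHeap A eps) {F F' : Set E} (hF : IsIdeal F)
    (hF' : IsIdeal F') (hfin : (F ∆ F').Finite) {β : E} (hβ : β ∈ F ∆ F') :
    chiFn eps F F' (eps β) ≠ 0 := by
  rcases hβ with hβ | hβ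
  · exact (hE.chiFn_neg hF hF' (hfin.subset Set.subset_union_left) hβ).ne
  · have := hE.chiFn_neg hF' hF (hfin.subset Set.subset_union_right) hβ
    rw [chiFn_swap] at this
    omega

lemma eps_ne_of_removable_of_addable (hE : IsFullHeap A eps) {I : Set E} (hI : IsIdeal I)
    {a β : E} (ha : a ∈ I) (hrem : IsIdeal (I \ {a})) (hβ : β ∉ I)
    (hadd : IsIdeal (I ∪ {β})) :
    eps a ≠ eps β := by
  intro he
  have hab : a < β := hE.lt_of_mem_of_notMem hI ha hβ he
  have hgap : Finset.Ioo a β = ∅ := by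
    refine Finset.eq_empty_of_forall_notMem fun c hc => ?_
    obtain ⟨hac, hcβ⟩ := Finset.mem_Ioo.mp hc
    have hcI : c ∈ I := (hadd (Or.inr rfl) hcβ.le).resolve_right hcβ.ne
    exact (isIdeal_sdiff_singleton_iff hI).mp hrem c hcI hac
  have hsum := hE.interval a β hab he fun c hac hcβ _ =>
    Finset.notMem_empty c (hgap ▸ Finset.mem_Ioo.mpr ⟨hac, hcβ⟩)
  simp [hgap] at hsum

lemma sact_eq_sdiff (hE : IsFullHeap A eps) {I : Set E} (hI : IsIdeal I) {β : E} (hβ : β ∈ I)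
    (hrem : IsIdeal (I \ {β})) : Sact eps (eps β) I = I \ {β} := by
  have h : ∃ a, a ∈ I ∧ eps a = eps β ∧ IsIdeal (I \ {a}) := ⟨β, hβ, rfl, hrem⟩
  obtain ⟨ha, hae, harem⟩ := h.choose_spec
  rw [Sact, dif_pos h]
  congr
  rcases hE.comparable _ β (Or.inl hae) with hle | hle
  · exact hle.eq_of_not_lt ((isIdeal_sdiff_singleton_iff hI).mp harem β hβ)
  · exact (hle.eq_of_not_lt ((isIdeal_sdiff_singleton_iff hI).mp hrem _ ha)).symm

lemma sact_eq_union (hE : IsFullHeap A eps) {I : Set E} (hI : IsIdeal I) {β : E} (hβ : β ∉ I)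
    (hadd : IsIdeal (I ∪ {β})) : Sact eps (eps β) I = I ∪ {β} := by
  have hno : ¬ ∃ a, a ∈ I ∧ eps a = eps β ∧ IsIdeal (I \ {a}) :=
    fun ⟨a, ha, he, hrem⟩ => hE.eps_ne_of_removable_of_addable hI ha hrem hβ hadd he
  have h : ∃ a, a ∉ I ∧ eps a = eps β ∧ IsIdeal (I ∪ {a}) := ⟨β, hβ, rfl, hadd⟩
  obtain ⟨ha, hae, haadd⟩ := h.choose_spec
  rw [Sact, dif_neg hno, dif_pos h]
  congr
  rcases hE.comparable _ β (Or.inl hae) with hle | hle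
  · exact (hadd (Or.inr rfl) hle).resolve_left ha
  · exact ((haadd (Or.inr rfl) hle).resolve_left hβ).symm

lemma exists_sact_step (hE : IsFullHeap A eps) {F F' : Set E} (hF : IsIdeal F)
    (hF' : IsIdeal F') (hfin : (F ∆ F').Finite) (hne : F ≠ F') :
    ∃ β ∈ F ∆ F', IsIdeal (Sact eps (eps β) F) ∧ Sact eps (eps β) F ∆ F = {β} := by
  by_cases hloss : (F \ F').Nonempty
  · obtain ⟨β, hβmax⟩ := (hfin.subset Set.subset_union_left).exists_maximal hloss
    obtain ⟨hβF, hβF'⟩ := hβmax.prop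
    have hrem : IsIdeal (F \ {β}) := by
      refine (isIdeal_sdiff_singleton_iff hF).mpr fun x hx hβx => ?_
      by_cases hxF' : x ∈ F'
      · exact hβF' (hF' hxF' hβx.le)
      · exact hβx.ne (hβmax.eq_of_le ⟨hx, hxF'⟩ hβx.le)
    refine ⟨β, Or.inl ⟨hβF, hβF'⟩, ?_⟩
    rw [hE.sact_eq_sdiff hF hβF hrem, symmDiff_of_le Set.sdiff_subset,
      Set.sdiff_sdiff_cancel_left (Set.singleton_subset_iff.mpr hβF)]
    exact ⟨hrem, rfl⟩
  · have hsub : F ⊆ F' := Set.sdiff_eq_empty.mp (Set.not_nonempty_iff_eq_empty.mp hloss)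
    obtain ⟨β, hβmin⟩ := (hfin.subset Set.subset_union_right).exists_minimal
      (Set.nonempty_of_ssubset (hsub.ssubset_of_ne hne))
    obtain ⟨hβF', hβF⟩ := hβmin.prop
    have hadd : IsIdeal (F ∪ {β}) := by
      refine isIdeal_union_singleton hF fun y hyβ => ?_
      by_contra hyF
      exact hyβ.ne (hβmin.eq_of_le ⟨hF' hβF' hyβ.le, hyF⟩ hyβ.le)
    refine ⟨β, Or.inr ⟨hβF', hβF⟩, ?_⟩
    rw [hE.sact_eq_union hF hβF hadd, symmDiff_comm, symmDiff_of_le Set.subset_union_left,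
      Set.union_sdiff_left, sdiff_eq_left.mpr (Set.disjoint_singleton_left.mpr hβF)]
    exact ⟨hadd, rfl⟩

theorem exists_sact_chain (hE : IsFullHeap A eps) {F F' : Set E} (hF : IsIdeal F)
    (hF' : IsIdeal F') (hfin : (F ∆ F').Finite) :
    ∃ l : List P, l.foldr (Sact eps) F = F' ∧ IsElementaryChain eps F l ∧
      ∀ p ∈ l, ∃ β ∈ F ∆ F', eps β = p := by
  by_cases hne : F = F'
  · exact ⟨[], hne, fun j hj => absurd hj (Nat.not_lt_zero j), by simp⟩
  obtain ⟨β, hβ, hG, hstep⟩ := hE.exists_sact_step hF hF' hfin hne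
  have hGF' : Sact eps (eps β) F ∆ F' = F ∆ F' \ {β} :=
    symmDiff_eq_sdiff_of_symmDiff_eq hstep (Set.singleton_subset_iff.mpr hβ)
  have : (F ∆ F' \ {β}).ncard < (F ∆ F').ncard := Set.ncard_sdiff_singleton_lt_of_mem hβ hfin
  obtain ⟨l, hl, hchain, hlabels⟩ := hE.exists_sact_chain hG hF' (hGF' ▸ hfin.sdiff)
  refine ⟨l ++ [eps β], by simpa using hl, hchain.append_singleton hstep, fun p hp => ?_⟩
  rcases List.mem_append.mp hp with hp | hp
  · obtain ⟨γ, hγ, rfl⟩ := hlabels p hp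
    exact ⟨γ, (hGF' ▸ hγ).1, rfl⟩
  · exact ⟨β, hβ, (List.mem_singleton.mp hp).symm⟩
termination_by (F ∆ F').ncard
decreasing_by rwa [hGF']

end IsFullHeap

theorem stmt2_general {P E : Type*} [Fintype P] [PartialOrder E] [LocallyFiniteOrder E]
    {A : P → P → ℤ} {eps : E → P}
    (hE : IsFullHeap A eps)
    {F F' : Set E} (hF : IsProperIdeal eps F) (hF' : IsProperIdeal eps F') :
    ∃ l : List P,
      l.foldr (Sact eps) F = F' ∧
      (∀ j < l.length, ∃ β : E,
        symmDiff ((l.drop j).foldr (Sact eps) F) ((l.drop (j + 1)).foldr (Sact eps) F)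
          = {β}) ∧
      (∀ p ∈ l, chiFn eps F F' p ≠ 0) := by
  have hfin := hE.symmDiff_finite hF hF'
  obtain ⟨l, hl, hchain, hlabels⟩ := hE.exists_sact_chain hF.1 hF'.1 hfin
  refine ⟨l, hl, hchain, fun p hp => ?_⟩
  obtain ⟨β, hβ, rfl⟩ := hlabels p hp
  exact hE.chiFn_ne_zero hF.1 hF'.1 hfin hβ

/-- Any two proper ideals of a full heap are connected by a
finite sequence of applications of the operators `S_p`; consecutive stages
differ by a single element, and every label used appears with nonzero
coefficient in `chi(F, F')`. -/
theorem stmt2 {P E : Type*} [Fintype P] [PartialOrder E] [LocallyFiniteOrder E]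
    {A : P → P → ℤ} {eps : E → P}
    (hA : IsGCM A) (hE : IsFullHeap A eps)
    {F F' : Set E} (hF : IsProperIdeal eps F) (hF' : IsProperIdeal eps F') :
    ∃ l : List P,
      l.foldr (Sact eps) F = F' ∧
      (∀ j < l.length, ∃ β : E,
        symmDiff ((l.drop j).foldr (Sact eps) F) ((l.drop (j + 1)).foldr (Sact eps) F)
          = {β}) ∧
      (∀ p ∈ l, chiFn eps F F' p ≠ 0) :=
  stmt2_general hE hF hF'
end

section
/- Let E be a full heap over A, where P is finite and A is of affine type. Then for every w in W and all proper ideals F, F' of E, chi(w · F, w · F') = w(chi(F, F')), where w acts on B via the S_p-action and on Z^P via the reflection representation. -/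
/-!
For a proper ideal `F` and a vertex `p`, let `a` be the last element of `F` labelled `p` and `b`
the first element outside `F` labelled `p`. By the interval axiom the elements strictly between
`a` and `b` carry total weight `-∑ A p (eps c) = 2`, and `S_p` removes `a`, fixes `F`, or adds `b`
according as the part `m_p(F)` of this weight lying in `F` (`frameWeight`) is `0`, `1` or `2`; thus
`chi(F, S_p F) = (m_p(F) - 1) e_p`. As `chi` is a cocycle, the claim for `s_p` reduces to
`m_p(G) - m_p(F) = -∑ q, A p q * chi(F, G) q`. Both sides are additive along chains of proper
ideals, so it suffices to add a single element `γ` to `F`, where it is a direct check on the label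
of `γ`. Finally, the `s_p` generate `W`.
-/

open scoped symmDiff

section Character

variable {P E : Type*} (eps : E → P)

lemma chiFn_self (X : Set E) : chiFn eps X X = 0 := by
  funext r
  simp [chiFn]

lemma chiFn_swap_s5 (X Y : Set E) : chiFn eps Y X = -chiFn eps X Y := by
  funext r
  simp [chiFn]

lemma chiFn_apply_eq_ncard_sub_ncard {X Y D : Set E} (hD : D.Finite) (hXY : X ∆ Y ⊆ D)
    (r : P) :
    chiFn eps X Y r =
      ((Y ∩ D ∩ eps ⁻¹' {r}).ncard : ℤ) - ((X ∩ D ∩ eps ⁻¹' {r}).ncard : ℤ) := by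
  set S := X ∩ D ∩ eps ⁻¹' {r}
  set T := Y ∩ D ∩ eps ⁻¹' {r}
  have hT : (Y \ X) ∩ eps ⁻¹' {r} = T \ S := by
    ext x
    have := @hXY x
    simp only [S, T, Set.mem_symmDiff, Set.mem_inter_iff, Set.mem_sdiff] at this ⊢
    tauto
  have hS : (X \ Y) ∩ eps ⁻¹' {r} = S \ T := by
    ext x
    have := @hXY x
    simp only [S, T, Set.mem_symmDiff, Set.mem_inter_iff, Set.mem_sdiff] at this ⊢
    tauto
  have hSfin : S.Finite := hD.subset fun x hx => hx.1.2
  have hTfin : T.Finite := hD.subset fun x hx => hx.1.2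
  have h₁ := Set.ncard_inter_add_ncard_sdiff_eq_ncard T S hTfin
  have h₂ := Set.ncard_inter_add_ncard_sdiff_eq_ncard S T hSfin
  rw [Set.inter_comm] at h₂
  simp only [chiFn, hT, hS]
  omega

lemma chiFn_add {X Y Z : Set E} (hXY : (X ∆ Y).Finite) (hYZ : (Y ∆ Z).Finite) :
    chiFn eps X Z = chiFn eps X Y + chiFn eps Y Z := by
  funext r
  have hD := hXY.union hYZ
  rw [Pi.add_apply, chiFn_apply_eq_ncard_sub_ncard eps hD (symmDiff_triangle X Y Z),
    chiFn_apply_eq_ncard_sub_ncard eps hD Set.subset_union_left,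
    chiFn_apply_eq_ncard_sub_ncard eps hD Set.subset_union_right]
  ring

variable [DecidableEq P]

lemma chiFn_union_singleton {F : Set E} {γ : E} (hγ : γ ∉ F) :
    chiFn eps F (F ∪ {γ}) = Pi.single (eps γ) 1 := by
  have h₁ : (F ∪ {γ}) \ F = {γ} := by
    ext x
    simp only [Set.mem_sdiff, Set.mem_union, Set.mem_singleton_iff]
    constructor
    · tauto
    · rintro rfl
      exact ⟨Or.inr rfl, hγ⟩
  have h₂ : F \ (F ∪ {γ}) = ∅ := Set.sdiff_eq_empty.2 Set.subset_union_left
  funext r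
  simp only [chiFn, h₁, h₂, Set.empty_inter, Set.ncard_empty]
  rcases eq_or_ne (eps γ) r with rfl | hr
  · simp
  · rw [Set.singleton_inter_eq_empty.2 (show γ ∉ eps ⁻¹' {r} from hr)]
    simp [hr.symm]

lemma chiFn_diff_singleton {F : Set E} {γ : E} (hγ : γ ∈ F) :
    chiFn eps F (F \ {γ}) = Pi.single (eps γ) (-1) := by
  have h := chiFn_union_singleton eps (F := F \ {γ}) (γ := γ) (by simp)
  rw [Set.sdiff_union_self, Set.union_eq_self_of_subset_right (Set.singleton_subset_iff.2 hγ)] at h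
  rw [chiFn_swap_s5, h, Pi.single_neg]

end Character

lemma IsChain.exists_isGreatest {E : Type*} [PartialOrder E] [LocallyFiniteOrder E]
    {s : Set E} (hs : IsChain (· ≤ ·) s) {a b : E} (ha : a ∈ s) (hb : b ∈ upperBounds s) :
    ∃ c, IsGreatest s c := by
  have hfin : (s ∩ Set.Icc a b).Finite := (Set.finite_Icc a b).subset Set.inter_subset_right
  obtain ⟨c, hc⟩ := hfin.exists_maximal ⟨a, ha, le_rfl, hb ha⟩
  refine ⟨c, hc.1.1, fun x hx => ?_⟩
  rcases eq_or_ne x c with rfl | hne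
  · exact le_rfl
  · exact (hs hx hc.1.1 hne).elim id fun h => hc.2 ⟨hx, hc.1.2.1.trans h, hb hx⟩ h

lemma IsChain.exists_isLeast {E : Type*} [PartialOrder E] [LocallyFiniteOrder E]
    {s : Set E} (hs : IsChain (· ≤ ·) s) {a b : E} (ha : a ∈ lowerBounds s) (hb : b ∈ s) :
    ∃ c, IsLeast s c :=
  IsChain.exists_isGreatest (E := Eᵒᵈ) hs.symm hb ha

section Frame

variable {P E : Type*} [PartialOrder E] {eps : E → P}

/-- `S_p` can only remove `a` from `F` or add `b` to it (`IsFrame.Sact_eq`). -/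
structure IsFrame (eps : E → P) (p : P) (F : Set E) (a b : E) : Prop where
  isGreatest : IsGreatest (F ∩ eps ⁻¹' {p}) a
  isLeast : IsLeast (Fᶜ ∩ eps ⁻¹' {p}) b

namespace IsFrame

variable {p : P} {F : Set E} {a b : E}

lemma left_mem (hf : IsFrame eps p F a b) : a ∈ F := hf.1.1.1

lemma eps_left (hf : IsFrame eps p F a b) : eps a = p := hf.1.1.2

lemma right_notMem (hf : IsFrame eps p F a b) : b ∉ F := hf.2.1.1

lemma eps_right (hf : IsFrame eps p F a b) : eps b = p := hf.2.1.2

lemma le_left (hf : IsFrame eps p F a b) {c : E} (hc : c ∈ F) (hcp : eps c = p) : c ≤ a :=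
  hf.1.2 ⟨hc, hcp⟩

lemma right_le (hf : IsFrame eps p F a b) {c : E} (hc : c ∉ F) (hcp : eps c = p) : b ≤ c :=
  hf.2.2 ⟨hc, hcp⟩

lemma eq_of_isIdeal_sdiff (hf : IsFrame eps p F a b) {x : E} (hx : x ∈ F) (hxp : eps x = p)
    (hid : IsIdeal (F \ {x})) : x = a := by
  by_contra hne
  exact (hid ⟨hf.left_mem, Ne.symm hne⟩ (hf.le_left hx hxp)).2 rfl

lemma eq_of_isIdeal_union (hf : IsFrame eps p F a b) {x : E} (hx : x ∉ F) (hxp : eps x = p)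
    (hid : IsIdeal (F ∪ {x})) : x = b := by
  by_contra hne
  exact (hid (Or.inr rfl) (hf.right_le hx hxp)).elim hf.right_notMem fun h => hne h.symm

open Classical in
lemma Sact_eq (hf : IsFrame eps p F a b) :
    Sact eps p F =
      if IsIdeal (F \ {a}) then F \ {a} else if IsIdeal (F ∪ {b}) then F ∪ {b} else F := by
  have hrem : (∃ x, x ∈ F ∧ eps x = p ∧ IsIdeal (F \ {x})) ↔ IsIdeal (F \ {a}) :=
    ⟨fun ⟨x, hx, hxp, hid⟩ => hf.eq_of_isIdeal_sdiff hx hxp hid ▸ hid,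
      fun h => ⟨a, hf.left_mem, hf.eps_left, h⟩⟩
  have hadd : (∃ x, x ∉ F ∧ eps x = p ∧ IsIdeal (F ∪ {x})) ↔ IsIdeal (F ∪ {b}) :=
    ⟨fun ⟨x, hx, hxp, hid⟩ => hf.eq_of_isIdeal_union hx hxp hid ▸ hid,
      fun h => ⟨b, hf.right_notMem, hf.eps_right, h⟩⟩
  by_cases h₁ : IsIdeal (F \ {a})
  · have h := hrem.2 h₁
    obtain ⟨hx, hxp, hid⟩ := h.choose_spec
    rw [Sact, dif_pos h, if_pos h₁, hf.eq_of_isIdeal_sdiff hx hxp hid]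
  · by_cases h₂ : IsIdeal (F ∪ {b})
    · have h := hadd.2 h₂
      obtain ⟨hx, hxp, hid⟩ := h.choose_spec
      rw [Sact, dif_neg (mt hrem.1 h₁), dif_pos h, if_neg h₁, if_pos h₂,
        hf.eq_of_isIdeal_union hx hxp hid]
    · rw [Sact, dif_neg (mt hrem.1 h₁), dif_neg (mt hadd.1 h₂), if_neg h₁, if_neg h₂]

lemma Sact_symmDiff_subset (hf : IsFrame eps p F a b) : Sact eps p F ∆ F ⊆ {a, b} := by
  rw [hf.Sact_eq]
  split_ifs <;> intro x hx <;> simp [Set.mem_symmDiff] at hx ⊢ <;> tauto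

lemma union_singleton (hf : IsFrame eps p F a b) {γ : E} (hγp : eps γ ≠ p) :
    IsFrame eps p (F ∪ {γ}) a b := by
  have h₁ : (F ∪ {γ}) ∩ eps ⁻¹' {p} = F ∩ eps ⁻¹' {p} := by
    ext x
    simp only [Set.mem_inter_iff, Set.mem_union, Set.mem_singleton_iff, Set.mem_preimage]
    constructor
    · rintro ⟨hx | rfl, hxp⟩
      · exact ⟨hx, hxp⟩
      · exact absurd hxp hγp
    · exact fun ⟨hx, hxp⟩ => ⟨Or.inl hx, hxp⟩
  have h₂ : (F ∪ {γ})ᶜ ∩ eps ⁻¹' {p} = Fᶜ ∩ eps ⁻¹' {p} := by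
    ext x
    simp only [Set.mem_inter_iff, Set.mem_compl_iff, Set.mem_union, Set.mem_singleton_iff,
      Set.mem_preimage]
    constructor
    · tauto
    · rintro ⟨hx, hxp⟩
      exact ⟨fun h => h.elim hx fun h => hγp (h ▸ hxp), hxp⟩
  exact ⟨h₁ ▸ hf.1, h₂ ▸ hf.2⟩

end IsFrame

lemma IsProperIdeal.exists_union_singleton {F G : Set E} (hF : IsProperIdeal eps F)
    (hG : IsProperIdeal eps G) (hFG : F ⊆ G) (hfin : (G \ F).Finite) (hne : (G \ F).Nonempty) :
    ∃ γ ∈ G \ F, IsProperIdeal eps (F ∪ {γ}) := by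
  obtain ⟨γ, hγ⟩ := hfin.exists_minimal hne
  refine ⟨γ, hγ.1, ⟨?_, fun r => ⟨?_, ?_⟩⟩⟩
  · rintro x (hx | hx) y hyx
    · exact Or.inl (hF.1 hx hyx)
    · rw [Set.mem_singleton_iff] at hx
      subst hx
      rcases hyx.lt_or_eq with hlt | rfl
      · by_contra hy
        exact hlt.not_ge (hγ.2 ⟨hG.1 hγ.1.1 hyx, fun h => hy (Or.inl h)⟩ hlt.le)
      · exact Or.inr rfl
  · obtain ⟨a, har, haF⟩ := (hF.2 r).1
    exact ⟨a, har, Or.inl haF⟩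
  · obtain ⟨b, hbr, hbG⟩ := (hG.2 r).2
    exact ⟨b, hbr, fun h => h.elim (fun h => hbG (hFG h)) fun h => hbG (h ▸ hγ.1.1)⟩

end Frame

section Heap

variable {P E : Type*} [PartialOrder E] [LocallyFiniteOrder E] {A : P → P → ℤ} {eps : E → P}

lemma IsFullHeap.isChain_inter_fibre (hE : IsFullHeap A eps) (s : Set E) (p : P) :
    IsChain (· ≤ ·) (s ∩ eps ⁻¹' {p}) :=
  fun x hx y hy _ => hE.comparable x y (Or.inl (hx.2.trans hy.2.symm))

lemma IsFullHeap.exists_lt_le_of_lt (hE : IsFullHeap A eps) {a x : E} (hax : a < x) :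
    ∃ y, a < y ∧ y ≤ x ∧ (eps a = eps y ∨ Adj A (eps a) (eps y)) := by
  have hgen := (hE.le_generated a x).1 hax.le
  induction hgen with
  | refl => exact absurd hax (lt_irrefl a)
  | @tail y x hay hyx ih =>
    rcases ((hE.le_generated a y).2 hay).lt_or_eq with hlt | rfl
    · obtain ⟨z, haz, hzy, hlab⟩ := ih hlt
      exact ⟨z, haz, hzy.trans hyx.1, hlab⟩
    · exact ⟨x, hax, le_rfl, hyx.2⟩

lemma IsFullHeap.exists_le_lt_of_lt (hE : IsFullHeap A eps) {x b : E} (hxb : x < b) :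
    ∃ y, x ≤ y ∧ y < b ∧ (eps y = eps b ∨ Adj A (eps y) (eps b)) := by
  have hgen := (hE.le_generated x b).1 hxb.le
  induction hgen using Relation.ReflTransGen.head_induction_on with
  | refl => exact absurd hxb (lt_irrefl b)
  | @head x y hxy hyb ih =>
    rcases ((hE.le_generated y b).2 hyb).lt_or_eq with hlt | rfl
    · obtain ⟨z, hyz, hzb, hlab⟩ := ih hlt
      exact ⟨z, hxy.1.trans hyz, hzb, hlab⟩
    · exact ⟨x, le_rfl, hxb, hxy.2⟩

lemma IsFullHeap.exists_isFrame (hE : IsFullHeap A eps) {F : Set E}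
    (hF : IsProperIdeal eps F) (p : P) : ∃ a b, IsFrame eps p F a b := by
  obtain ⟨⟨a₀, ha₀, ha₀F⟩, ⟨b₀, hb₀, hb₀F⟩⟩ := hF.2 p
  have hle : ∀ x ∈ F ∩ eps ⁻¹' {p}, ∀ y ∈ Fᶜ ∩ eps ⁻¹' {p}, x ≤ y := fun x hx y hy =>
    (hE.comparable x y (Or.inl (hx.2.trans hy.2.symm))).resolve_right fun h => hy.1 (hF.1 hx.1 h)
  obtain ⟨a, ha⟩ := (hE.isChain_inter_fibre F p).exists_isGreatest ⟨ha₀F, ha₀⟩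
    fun x hx => hle x hx b₀ ⟨hb₀F, hb₀⟩
  obtain ⟨b, hb⟩ := (hE.isChain_inter_fibre Fᶜ p).exists_isLeast
    (fun y hy => hle a₀ ⟨ha₀F, ha₀⟩ y hy) ⟨hb₀F, hb₀⟩
  exact ⟨a, b, ha, hb⟩

/-- The part of the total weight `-∑ c ∈ Ioo a b, A p (eps c) = 2` lying in `F`. -/
noncomputable def frameWeight (A : P → P → ℤ) (eps : E → P) (p : P) (F : Set E) (a b : E) :
    ℤ :=
  -∑ c ∈ Finset.Ioo a b, F.indicator (fun c => A p (eps c)) c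

namespace IsFrame

variable {p : P} {F : Set E} {a b : E}

lemma lt (hE : IsFullHeap A eps) (hF : IsIdeal F) (hf : IsFrame eps p F a b) : a < b :=
  ((hE.comparable a b (Or.inl (hf.eps_left.trans hf.eps_right.symm))).resolve_right
    fun h => hf.right_notMem (hF hf.left_mem h)).lt_of_ne fun h => hf.right_notMem (h ▸ hf.left_mem)

lemma eps_ne (hf : IsFrame eps p F a b) {c : E} (hc : c ∈ Finset.Ioo a b) : eps c ≠ p := by
  rw [Finset.mem_Ioo] at hc
  intro hcp
  by_cases hcF : c ∈ F
  · exact (hf.le_left hcF hcp).not_gt hc.1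
  · exact (hf.right_le hcF hcp).not_gt hc.2

lemma sum_Ioo (hE : IsFullHeap A eps) (hF : IsIdeal F) (hf : IsFrame eps p F a b) :
    ∑ c ∈ Finset.Ioo a b, A p (eps c) = -2 := by
  have h := hE.interval a b (hf.lt hE hF) (hf.eps_left.trans hf.eps_right.symm)
    fun c h₁ h₂ => hf.eps_left ▸ hf.eps_ne (Finset.mem_Ioo.2 ⟨h₁, h₂⟩)
  rwa [hf.eps_left] at h

lemma isIdeal_sdiff_iff (hE : IsFullHeap A eps) (hF : IsIdeal F) (hf : IsFrame eps p F a b) :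
    IsIdeal (F \ {a}) ↔ ∀ c ∈ Finset.Ioo a b, c ∈ F → A p (eps c) = 0 := by
  constructor
  · intro hid c hc hcF
    exact absurd (hid ⟨hcF, (Finset.mem_Ioo.1 hc).1.ne'⟩ (Finset.mem_Ioo.1 hc).1.le).2 (by simp)
  · intro h
    have habove : ∀ x ∈ F, ¬ a < x := by
      intro x hxF hax
      obtain ⟨y, hay, hyx, hlab⟩ := hE.exists_lt_le_of_lt hax
      have hyF : y ∈ F := hF hxF hyx
      rw [hf.eps_left] at hlab
      rcases hlab with hyp | hadj
      · exact (hf.le_left hyF hyp.symm).not_gt hay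
      · have hyb : y < b := ((hE.comparable b y (hf.eps_right ▸ Or.inr hadj)).resolve_left
          fun h => hf.right_notMem (hF hyF h)).lt_of_ne fun h => hf.right_notMem (h ▸ hyF)
        exact hadj.2 (h y (Finset.mem_Ioo.2 ⟨hay, hyb⟩) hyF)
    intro x hx y hyx
    refine ⟨hF hx.1 hyx, fun hya => ?_⟩
    rw [Set.mem_singleton_iff] at hya
    subst hya
    exact habove x hx.1 (hyx.lt_of_ne fun h => hx.2 h.symm)

lemma isIdeal_union_iff (hA : IsGCM A) (hE : IsFullHeap A eps) (hF : IsIdeal F)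
    (hf : IsFrame eps p F a b) :
    IsIdeal (F ∪ {b}) ↔ ∀ c ∈ Finset.Ioo a b, c ∉ F → A p (eps c) = 0 := by
  constructor
  · intro hid c hc hcF
    exact absurd ((hid (Or.inr rfl) (Finset.mem_Ioo.1 hc).2.le).resolve_left hcF)
      (Finset.mem_Ioo.1 hc).2.ne
  · intro h
    have hbelow : ∀ x, x < b → x ∈ F := by
      intro x hxb
      by_contra hxF
      obtain ⟨y, hxy, hyb, hlab⟩ := hE.exists_le_lt_of_lt hxb
      have hyF : y ∉ F := fun hyF => hxF (hF hyF hxy)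
      rw [hf.eps_right] at hlab
      rcases hlab with hyp | hadj
      · exact (hf.right_le hyF hyp).not_gt hyb
      · have hay : a < y := ((hE.comparable y a (hf.eps_left ▸ Or.inr hadj)).resolve_left
          fun h => hyF (hF hf.left_mem h)).lt_of_ne fun h => hyF (h ▸ hf.left_mem)
        exact hadj.2 ((hA.2.2.1 p (eps y)).1 (h y (Finset.mem_Ioo.2 ⟨hay, hyb⟩) hyF))
    rintro x (hx | hx) y hyx
    · exact Or.inl (hF hx hyx)
    · rw [Set.mem_singleton_iff] at hx
      subst hx
      exact (hyx.lt_or_eq).imp (hbelow y) id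

lemma indicator_nonpos_of_mem_Ioo (hA : IsGCM A) (hf : IsFrame eps p F a b) (G : Set E)
    {c : E} (hc : c ∈ Finset.Ioo a b) : G.indicator (fun c => A p (eps c)) c ≤ 0 :=
  Set.indicator_apply_nonpos fun _ => hA.2.1 p (eps c) (hf.eps_ne hc).symm

lemma frameWeight_nonneg (hA : IsGCM A) (hf : IsFrame eps p F a b) :
    0 ≤ frameWeight A eps p F a b :=
  neg_nonneg.2 (Finset.sum_nonpos fun _ hc => hf.indicator_nonpos_of_mem_Ioo hA F hc)

lemma frameWeight_sub_two (hE : IsFullHeap A eps) (hF : IsIdeal F) (hf : IsFrame eps p F a b) :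
    frameWeight A eps p F a b - 2 =
      ∑ c ∈ Finset.Ioo a b, Fᶜ.indicator (fun c => A p (eps c)) c := by
  have h := hf.sum_Ioo hE hF
  rw [← Finset.sum_congr rfl fun c _ =>
    Set.indicator_self_add_compl_apply F (fun c => A p (eps c)) c, Finset.sum_add_distrib] at h
  rw [frameWeight]
  linarith

lemma frameWeight_le_two (hA : IsGCM A) (hE : IsFullHeap A eps) (hF : IsIdeal F)
    (hf : IsFrame eps p F a b) : frameWeight A eps p F a b ≤ 2 :=
  sub_nonpos.1 (hf.frameWeight_sub_two hE hF ▸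
    Finset.sum_nonpos fun _ hc => hf.indicator_nonpos_of_mem_Ioo hA Fᶜ hc)

lemma frameWeight_eq_zero_iff (hA : IsGCM A) (hE : IsFullHeap A eps) (hF : IsIdeal F)
    (hf : IsFrame eps p F a b) : frameWeight A eps p F a b = 0 ↔ IsIdeal (F \ {a}) := by
  rw [hf.isIdeal_sdiff_iff hE hF, frameWeight, neg_eq_zero,
    Finset.sum_eq_zero_iff_of_nonpos fun _ hc => hf.indicator_nonpos_of_mem_Ioo hA F hc]
  simp only [Set.indicator_apply_eq_zero]

lemma frameWeight_eq_two_iff (hA : IsGCM A) (hE : IsFullHeap A eps) (hF : IsIdeal F)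
    (hf : IsFrame eps p F a b) : frameWeight A eps p F a b = 2 ↔ IsIdeal (F ∪ {b}) := by
  rw [hf.isIdeal_union_iff hA hE hF, ← sub_eq_zero, hf.frameWeight_sub_two hE hF,
    Finset.sum_eq_zero_iff_of_nonpos fun _ hc => hf.indicator_nonpos_of_mem_Ioo hA Fᶜ hc]
  simp only [Set.indicator_apply_eq_zero, Set.mem_compl_iff]

lemma chiFn_Sact [DecidableEq P] (hA : IsGCM A) (hE : IsFullHeap A eps)
    (hF : IsIdeal F) (hf : IsFrame eps p F a b) :
    chiFn eps F (Sact eps p F) = Pi.single p (frameWeight A eps p F a b - 1) := by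
  rw [hf.Sact_eq]
  split_ifs with hrem hadd
  · rw [chiFn_diff_singleton eps hf.left_mem, hf.eps_left,
      (hf.frameWeight_eq_zero_iff hA hE hF).2 hrem]
    norm_num
  · rw [chiFn_union_singleton eps hf.right_notMem, hf.eps_right,
      (hf.frameWeight_eq_two_iff hA hE hF).2 hadd]
    norm_num
  · have h₀ := mt (hf.frameWeight_eq_zero_iff hA hE hF).1 hrem
    have h₂ := mt (hf.frameWeight_eq_two_iff hA hE hF).1 hadd
    have := hf.frameWeight_nonneg hA
    have := hf.frameWeight_le_two hA hE hF
    rw [chiFn_self, show frameWeight A eps p F a b = 1 by omega, sub_self, Pi.single_zero]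

lemma frameWeight_union_singleton (hE : IsFullHeap A eps) (hF : IsIdeal F)
    (hf : IsFrame eps p F a b) {γ : E} (hγ : γ ∉ F) (hγp : eps γ ≠ p) (hF' : IsIdeal (F ∪ {γ})) :
    frameWeight A eps p (F ∪ {γ}) a b = frameWeight A eps p F a b - A p (eps γ) := by
  classical
  have hmem : A p (eps γ) ≠ 0 → γ ∈ Finset.Ioo a b := by
    intro h
    have hadj : Adj A p (eps γ) := ⟨hγp.symm, h⟩
    have haγ : a < γ := ((hE.comparable a γ (Or.inr (hf.eps_left ▸ hadj))).resolve_right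
      fun h => hγ (hF hf.left_mem h)).lt_of_ne fun h => hγ (h ▸ hf.left_mem)
    have hγb : γ < b := ((hE.comparable b γ (Or.inr (hf.eps_right ▸ hadj))).resolve_left
      fun h => (hF' (Or.inr rfl) h).elim hf.right_notMem
        fun h => hγp (Set.mem_singleton_iff.1 h ▸ hf.eps_right)).lt_of_ne
      fun h => hγp (h ▸ hf.eps_right)
    exact Finset.mem_Ioo.2 ⟨haγ, hγb⟩
  have hdisj : ∀ c, c ∉ F ∩ {γ} := fun c hc => hγ (Set.mem_singleton_iff.1 hc.2 ▸ hc.1)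
  rw [frameWeight, frameWeight, Finset.sum_congr rfl fun c _ =>
    Set.indicator_union_of_notMem_inter (hdisj c) _, Finset.sum_add_distrib,
    Set.indicator_singleton, Finset.sum_pi_single']
  split_ifs with h
  · ring
  · rw [not_not.1 (mt hmem h)]
    ring

end IsFrame

lemma IsFullHeap.sdiff_finite_s5 [Finite P] (hE : IsFullHeap A eps) {F G : Set E}
    (hF : IsProperIdeal eps F) (hG : IsProperIdeal eps G) : (G \ F).Finite := by
  have hcover : G \ F ⊆ ⋃ r, (G \ F) ∩ eps ⁻¹' {r} := fun x hx =>
    Set.mem_iUnion.2 ⟨eps x, hx, rfl⟩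
  refine (Set.finite_iUnion fun r => ?_).subset hcover
  obtain ⟨_, b, hfF⟩ := hE.exists_isFrame hF r
  obtain ⟨a, _, hfG⟩ := hE.exists_isFrame hG r
  exact (Set.finite_Icc b a).subset fun x ⟨⟨hxG, hxF⟩, hxr⟩ =>
    ⟨hfF.right_le hxF hxr, hfG.le_left hxG hxr⟩

lemma IsFullHeap.symmDiff_finite_s5 [Finite P] (hE : IsFullHeap A eps) {F G : Set E}
    (hF : IsProperIdeal eps F) (hG : IsProperIdeal eps G) : (F ∆ G).Finite :=
  (hE.sdiff_finite_s5 hG hF).union (hE.sdiff_finite_s5 hF hG)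

lemma IsProperIdeal.union (hE : IsFullHeap A eps) {F G : Set E} (hF : IsProperIdeal eps F)
    (hG : IsProperIdeal eps G) : IsProperIdeal eps (F ∪ G) := by
  refine ⟨fun x hx y hyx => hx.imp (fun h => hF.1 h hyx) fun h => hG.1 h hyx, fun r => ?_⟩
  obtain ⟨a, har, haF⟩ := (hF.2 r).1
  obtain ⟨b, hbr, hbF⟩ := (hF.2 r).2
  obtain ⟨b', hb'r, hb'G⟩ := (hG.2 r).2
  refine ⟨⟨a, har, Or.inl haF⟩, ?_⟩
  rcases hE.comparable b b' (Or.inl (hbr.trans hb'r.symm)) with h | h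
  · exact ⟨b', hb'r, fun h' => h'.elim (fun h' => hbF (hF.1 h' h)) hb'G⟩
  · exact ⟨b, hbr, fun h' => h'.elim hbF fun h' => hb'G (hG.1 h' h)⟩

theorem IsFullHeap.sub_eq_of_forall_union_singleton [Finite P] (hE : IsFullHeap A eps)
    (d : Set E → ℤ) (φ : (P → ℤ) →+ ℤ)
    (hd : ∀ F γ, IsProperIdeal eps F → γ ∉ F → IsProperIdeal eps (F ∪ {γ}) →
      d (F ∪ {γ}) - d F = φ (chiFn eps F (F ∪ {γ})))
    {F G : Set E} (hF : IsProperIdeal eps F) (hG : IsProperIdeal eps G) :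
    d G - d F = φ (chiFn eps F G) := by
  have hsub : ∀ n, ∀ F G, IsProperIdeal eps F → IsProperIdeal eps G → F ⊆ G →
      (G \ F).ncard = n → d G - d F = φ (chiFn eps F G) := by
    intro n
    induction n with
    | zero =>
      intro F G hF hG hFG hn
      obtain rfl : F = G := hFG.antisymm
        (Set.sdiff_eq_empty.1 ((Set.ncard_eq_zero (hE.sdiff_finite_s5 hF hG)).1 hn))
      rw [sub_self, chiFn_self, map_zero]
    | succ n ih =>
      intro F G hF hG hFG hn
      have hfin := hE.sdiff_finite_s5 hF hG
      obtain ⟨γ, hγ, hF'⟩ := hF.exists_union_singleton hG hFG hfin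
        (Set.nonempty_of_ncard_ne_zero (by omega))
      have hn' : (G \ (F ∪ {γ})).ncard = n := by
        rw [← Set.sdiff_sdiff, Set.ncard_sdiff_singleton_of_mem hγ, hn, Nat.add_sub_cancel]
      have h₁ := hd F γ hF hγ.2 hF'
      have h₂ := ih _ G hF' hG (Set.union_subset hFG (Set.singleton_subset_iff.2 hγ.1)) hn'
      rw [chiFn_add eps (hE.symmDiff_finite_s5 hF hF') (hE.symmDiff_finite_s5 hF' hG), map_add, ← h₁,
        ← h₂]
      ring
  have hU := hF.union hE hG
  rw [chiFn_add eps (hE.symmDiff_finite_s5 hF hU) (hE.symmDiff_finite_s5 hU hG), map_add,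
    ← hsub _ F _ hF hU Set.subset_union_left rfl, chiFn_swap_s5, map_neg,
    ← hsub _ G _ hG hU Set.subset_union_right rfl]
  ring

theorem chiFn_Sact_union_singleton_sub [DecidableEq P] (hA : IsGCM A) (hE : IsFullHeap A eps)
    (p : P) {F : Set E} {γ : E} (hF : IsProperIdeal eps F) (hγ : γ ∉ F)
    (hF' : IsProperIdeal eps (F ∪ {γ})) :
    chiFn eps (F ∪ {γ}) (Sact eps p (F ∪ {γ})) p - chiFn eps F (Sact eps p F) p =
      -A p (eps γ) := by
  obtain ⟨a, b, hf⟩ := hE.exists_isFrame hF p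
  rw [hf.chiFn_Sact hA hE hF.1, Pi.single_eq_same]
  by_cases hγp : eps γ = p
  · have hγb : γ = b := hf.eq_of_isIdeal_union hγ hγp hF'.1
    have hrem : IsIdeal ((F ∪ {γ}) \ {γ}) := by
      rw [Set.union_sdiff_right, Set.sdiff_singleton_eq_self hγ]
      exact hF.1
    obtain ⟨a', b', hf'⟩ := hE.exists_isFrame hF' p
    have hγa' : γ = a' := hf'.eq_of_isIdeal_sdiff (Or.inr rfl) hγp hrem
    subst hγb hγa'
    rw [hf'.chiFn_Sact hA hE hF'.1, Pi.single_eq_same,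
      (hf'.frameWeight_eq_zero_iff hA hE hF'.1).2 hrem,
      (hf.frameWeight_eq_two_iff hA hE hF.1).2 hF'.1, hγp, hA.1 p]
    norm_num
  · rw [(hf.union_singleton hγp).chiFn_Sact hA hE hF'.1, Pi.single_eq_same,
      hf.frameWeight_union_singleton hE hF.1 hγ hγp hF'.1]
    ring

end Heap

lemma reflAct_eq_sub_single {P : Type*} [Fintype P] [DecidableEq P] (A : P → P → ℤ) (p : P)
    (v : P → ℤ) : reflAct A p v = v - Pi.single p (∑ q, A p q * v q) := by
  funext r
  by_cases hr : r = p
  · subst hr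
    simp [reflAct]
  · simp [reflAct, hr]

theorem chiFn_Sact_Sact {P E : Type*} [Fintype P] [DecidableEq P] [PartialOrder E]
    [LocallyFiniteOrder E] {A : P → P → ℤ} {eps : E → P} (hA : IsGCM A) (hE : IsFullHeap A eps)
    (p : P) {F G : Set E} (hF : IsProperIdeal eps F) (hG : IsProperIdeal eps G) :
    chiFn eps (Sact eps p F) (Sact eps p G) = reflAct A p (chiFn eps F G) := by
  have hfin : ∀ {H}, IsProperIdeal eps H → (Sact eps p H ∆ H).Finite := fun hH => by
    obtain ⟨a, b, hf⟩ := hE.exists_isFrame hH p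
    exact (Set.toFinite {a, b}).subset hf.Sact_symmDiff_subset
  have hsingle : ∀ {H}, IsProperIdeal eps H →
      chiFn eps H (Sact eps p H) = Pi.single p (chiFn eps H (Sact eps p H) p) := fun hH => by
    obtain ⟨a, b, hf⟩ := hE.exists_isFrame hH p
    rw [hf.chiFn_Sact hA hE hH.1, Pi.single_eq_same]
  let φ : (P → ℤ) →+ ℤ := AddMonoidHom.mk' (fun v => -∑ q, A p q * v q) fun v w => by
    simp only [Pi.add_apply, mul_add, Finset.sum_add_distrib, neg_add]
  have hpot := hE.sub_eq_of_forall_union_singleton (fun H => chiFn eps H (Sact eps p H) p) φ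
    (fun H γ hH hγ hH' => by
      rw [chiFn_Sact_union_singleton_sub hA hE p hH hγ hH', chiFn_union_singleton eps hγ]
      simp [φ, Pi.single_apply]) hF hG
  simp only [φ, AddMonoidHom.mk'_apply] at hpot
  have hFG := hE.symmDiff_finite_s5 hF hG
  have hG' : (G ∆ Sact eps p G).Finite := symmDiff_comm (Sact eps p G) G ▸ hfin hG
  rw [chiFn_add eps (hfin hF) ((hFG.union hG').subset (symmDiff_triangle _ _ _)),
    chiFn_add eps hFG hG', chiFn_swap_s5 eps F, hsingle hF, hsingle hG, reflAct_eq_sub_single,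
    show ∑ q, A p q * chiFn eps F G q =
      chiFn eps F (Sact eps p F) p - chiFn eps G (Sact eps p G) p by linarith, Pi.single_sub]
  abel

theorem equivariant_of_closure_eq_top {G X V : Type*} [Group G] (act : G →* Equiv.Perm X)
    (ρ : G →* Equiv.Perm V) (χ : X → X → V) {S : Set G} (hS : Subgroup.closure S = ⊤)
    (h : ∀ s ∈ S, ∀ x y, χ (act s x) (act s y) = ρ s (χ x y)) (g : G) (x y : X) :
    χ (act g x) (act g y) = ρ g (χ x y) := by
  have hg : g ∈ Subgroup.closure S := hS ▸ Subgroup.mem_top g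
  induction hg using Subgroup.closure_induction generalizing x y with
  | mem s hs => exact h s hs x y
  | one => simp
  | mul g₁ g₂ _ _ ih₁ ih₂ => simp only [map_mul, Equiv.Perm.mul_apply, ih₂, ih₁]
  | inv g _ ih =>
    apply (ρ g).injective
    rw [← ih]
    simp only [map_inv, Equiv.Perm.inv_def, Equiv.apply_symm_apply]

theorem stmt5_general {P E : Type*} [Fintype P] [DecidableEq P] [PartialOrder E]
    [LocallyFiniteOrder E] {A : P → P → ℤ} {eps : E → P}
    (hA : IsGCM A) (hE : IsFullHeap A eps)
    (act : WeylGroup A →* Equiv.Perm {I : Set E // IsProperIdeal eps I})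
    (hact : ∀ (p : P) (I : {I : Set E // IsProperIdeal eps I}),
      (act (PresentedGroup.of p) I).val = Sact eps p I.val)
    (ρ : WeylGroup A →* Equiv.Perm (P → ℤ))
    (hρ : ∀ (p : P) (v : P → ℤ), ρ (PresentedGroup.of p) v = reflAct A p v) :
    ∀ (w : WeylGroup A) (F F' : {I : Set E // IsProperIdeal eps I}),
      chiFn eps (act w F).val (act w F').val = ρ w (chiFn eps F.val F'.val) :=
  equivariant_of_closure_eq_top act ρ (fun F F' => chiFn eps F.val F'.val)
    (PresentedGroup.closure_range_of _) fun _ ⟨p, hp⟩ F F' => by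
      rw [← hp, hact, hact, hρ]
      exact chiFn_Sact_Sact hA hE p F.2 F'.2

/-- For an affine `A`, the character intertwines the action
of `W` on pairs of proper ideals with the reflection representation:
`chi(w·F, w·F') = w(chi(F,F'))`. -/
theorem stmt5 {P E : Type*} [Fintype P] [DecidableEq P] [PartialOrder E]
    [LocallyFiniteOrder E] {A : P → P → ℤ} {eps : E → P}
    (hA : IsGCM A) (haff : IsAffine A) (hE : IsFullHeap A eps)
    (act : WeylGroup A →* Equiv.Perm {I : Set E // IsProperIdeal eps I})
    (hact : ∀ (p : P) (I : {I : Set E // IsProperIdeal eps I}),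
      (act (PresentedGroup.of p) I).val = Sact eps p I.val)
    (ρ : WeylGroup A →* Equiv.Perm (P → ℤ))
    (hρ : ∀ (p : P) (v : P → ℤ), ρ (PresentedGroup.of p) v = reflAct A p v) :
    ∀ (w : WeylGroup A) (F F' : {I : Set E // IsProperIdeal eps I}),
      chiFn eps (act w F).val (act w F').val = ρ w (chiFn eps F.val F'.val) :=
  stmt5_general hA hE act hact ρ hρ
end
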